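/- arXiv:2205.04825 — 2 statements merged into one kernel-verified Lean document; each statement's English description precedes it below -/
import Mathlib

section
/- For a complete graph K_n with n ≥ 3 and a connected bipartite graph G, the connectivity of the direct product satisfies κ(G × K_n) = min{n·κ(G), (n−1)·δ(G)}. -/
open SimpleGraph

universe u v

variable {α : Type u} {β : Type v}

/-- Direct (tensor) product of two simple graphs. -/
def SimpleGraph.tensorProd (G : SimpleGraph α) (H : SimpleGraph β) :
    SimpleGraph (α × β) where
  Adj x y := G.Adj x.1 y.1 ∧ H.Adj x.2 y.2
  symm := ⟨fun x y h => ⟨h.1.symm, h.2.symm⟩⟩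
  loopless := ⟨fun x h => G.irrefl h.1⟩

/-- Direct (tensor) product of a family of simple graphs. -/
def SimpleGraph.piTensorProd {ι : Type*} {V : ι → Type*}
    (G : ∀ i, SimpleGraph (V i)) : SimpleGraph (∀ i, V i) where
  Adj f g := f ≠ g ∧ ∀ i, (G i).Adj (f i) (g i)
  symm := ⟨fun f g h => ⟨h.1.symm, fun i => (h.2 i).symm⟩⟩
  loopless := ⟨fun f h => h.1 rfl⟩

/-- `S` is a vertex cut of `G`: deleting `S` leaves a disconnected graph. -/
def SimpleGraph.IsVertexCut (G : SimpleGraph α) (S : Set α) : Prop :=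
  ¬ (G.induce Sᶜ).Connected

/-- Vertex connectivity: minimum size of a set `S` such that `G - S` is
disconnected or has at most one vertex. -/
noncomputable def SimpleGraph.vConn (G : SimpleGraph α) : ℕ :=
  sInf {n | ∃ S : Set α, S.ncard = n ∧
    (G.IsVertexCut S ∨ Nat.card α ≤ n + 1)}

/-- Minimum degree (via neighbor set cardinalities). -/
noncomputable def SimpleGraph.minDeg (G : SimpleGraph α) : ℕ :=
  sInf {d | ∃ v, (G.neighborSet v).ncard = d}

/-- A minimum vertex cut. -/
def SimpleGraph.IsMinVertexCut (G : SimpleGraph α) (S : Set α) : Prop :=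
  G.IsVertexCut S ∧ S.ncard = G.vConn

/-- `G` is super connected: every minimum vertex cut is the neighborhood of a
vertex of minimum degree. -/
def SimpleGraph.SuperConnected (G : SimpleGraph α) : Prop :=
  ∀ S : Set α, G.IsMinVertexCut S →
    ∃ v, (G.neighborSet v).ncard = G.minDeg ∧ S = G.neighborSet v

/-- `(X, Y)` is a bipartition of `G`. -/
def SimpleGraph.IsBipartition (G : SimpleGraph α) (X Y : Set α) : Prop :=
  Disjoint X Y ∧ X ∪ Y = Set.univ ∧
    ∀ u v, G.Adj u v → (u ∈ X ∧ v ∈ Y) ∨ (u ∈ Y ∧ v ∈ X)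

/-- The graph `G̃ₙ`: vertex set `α × ZMod n`, with for each `i` a copy `Hᵢ`
of `G` on `(Xᵢ, Yᵢ)` and a copy `Hᵢ'` of `G` on `(Xᵢ₊₁, Yᵢ)`. -/
def tildeG (G : SimpleGraph α) (X Y : Set α) (n : ℕ) :
    SimpleGraph (α × ZMod n) where
  Adj a b := G.Adj a.1 b.1 ∧
    ((a.1 ∈ X ∧ b.1 ∈ Y ∧ (a.2 = b.2 ∨ a.2 = b.2 + 1)) ∨
     (a.1 ∈ Y ∧ b.1 ∈ X ∧ (b.2 = a.2 ∨ b.2 = a.2 + 1)))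
  symm := ⟨fun a b h => ⟨h.1.symm, by tauto⟩⟩
  loopless := ⟨fun a h => G.irrefl h.1⟩

/-!
Deleting every copy of a minimum vertex cut of `G`, or every copy outside one layer of the
neighbourhood of a vertex of minimum degree, disconnects `G × Kₙ`; this gives the upper bounds
`n κ(G)` and `(n - 1) δ(G)`.

For the lower bound let `S` be smaller than both and `C` a union of components of
`(G × Kₙ) - S`. If two surviving copies `(u, i)`, `(u, j)` were separated, every neighbour of `u`
would keep at most the copies in layers `i` and `j`; as `G` is triangle-free this forces
`|S| ≥ (n - 1) δ(G)`. Hence the vertices of `G` split into dead ones (all copies in `S`) and the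
projections of `C` and of its complement, and an edge between the two projections has all but
one copy of both ends in `S`. If every vertex of one projection lies on such an edge, the
neighbourhood of one of them again gives `|S| ≥ (n - 1) δ(G)`. Otherwise the dead vertices
together with the boundary of either projection form a vertex cut of `G`, and counting copies
gives `|S| ≥ n κ(G)`.
-/

open Set

lemma exists_notMem_of_mem_image_fst {T C : Set (α × β)} {x : α} (hC : C ⊆ Tᶜ)
    (hx : x ∈ Prod.fst '' C) : ∃ k, (x, k) ∉ T := by
  obtain ⟨⟨x, k⟩, hk, rfl⟩ := hx
  exact ⟨k, hC hk⟩

lemma mem_image_fst_or_mem_image_fst_sdiff {T C : Set (α × β)} {x : α} {k : β}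
    (h : (x, k) ∉ T) : x ∈ Prod.fst '' C ∨ x ∈ Prod.fst '' (Tᶜ \ C) := by
  by_cases hk : (x, k) ∈ C
  exacts [.inl ⟨_, hk, rfl⟩, .inr ⟨_, ⟨h, hk⟩, rfl⟩]

section Fiber

variable [Fintype β] [DecidableEq α] [DecidableEq β] {S : Finset (α × β)} {u : α}

def Finset.fiber (S : Finset (α × β)) (u : α) : Finset β := {i | (u, i) ∈ S}

lemma Finset.card_sub_card_le_card_fiber (F : Finset β) (h : ∀ i ∉ F, (u, i) ∈ S) :
    Fintype.card β - F.card ≤ (S.fiber u).card := by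
  rw [← Finset.card_compl]
  exact Finset.card_le_card fun i hi => by simpa [Finset.fiber] using h i (by simpa using hi)

lemma Finset.card_sub_one_le_card_fiber {i : β} (h : ∀ k ≠ i, (u, k) ∈ S) :
    Fintype.card β - 1 ≤ (S.fiber u).card := by
  simpa using S.card_sub_card_le_card_fiber {i} fun k hk => h k (by simpa using hk)

lemma Finset.card_le_card_fiber (h : ∀ k, (u, k) ∈ S) : Fintype.card β ≤ (S.fiber u).card := by
  simpa using S.card_sub_card_le_card_fiber ∅ fun k _ => h k

lemma Finset.sum_card_fiber_le (A : Finset α) : ∑ u ∈ A, (S.fiber u).card ≤ S.card :=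
  calc ∑ u ∈ A, (S.fiber u).card = ((A ×ˢ Finset.univ).filter (· ∈ S)).card := by
        rw [Finset.card_filter, Finset.sum_product]
        simp only [Finset.fiber, Finset.card_filter]
    _ ≤ S.card := Finset.card_le_card fun p hp => (Finset.mem_filter.1 hp).2

lemma Finset.card_mul_le_card_of_le_card_fiber {A : Finset α} {m : ℕ}
    (h : ∀ u ∈ A, m ≤ (S.fiber u).card) : A.card * m ≤ S.card := by
  simpa using (A.card_nsmul_le_sum _ m h).trans (S.sum_card_fiber_le A)

lemma Finset.ncard_mul_add_ncard_mul_le_card [Fintype α] {D T : Set α} (hDT : Disjoint D T)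
    {a b : ℕ} (hD : ∀ u ∈ D, a ≤ (S.fiber u).card) (hT : ∀ u ∈ T, b ≤ (S.fiber u).card) :
    D.ncard * a + T.ncard * b ≤ S.card := by
  classical
  rw [ncard_eq_toFinset_card', ncard_eq_toFinset_card']
  calc D.toFinset.card * a + T.toFinset.card * b
      ≤ ∑ u ∈ D.toFinset, (S.fiber u).card + ∑ u ∈ T.toFinset, (S.fiber u).card := by
        gcongr
        · simpa using D.toFinset.card_nsmul_le_sum _ a fun u hu => hD u (by simpa using hu)
        · simpa using T.toFinset.card_nsmul_le_sum _ b fun u hu => hT u (by simpa using hu)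
    _ = ∑ u ∈ D.toFinset ∪ T.toFinset, (S.fiber u).card :=
        (Finset.sum_union (disjoint_toFinset.2 hDT)).symm
    _ ≤ S.card := S.sum_card_fiber_le _

end Fiber

namespace SimpleGraph

section Cuts

/-- `A` is a union of connected components of `G - T`. -/
def IsComponentUnion (G : SimpleGraph α) (T A : Set α) : Prop :=
  A ⊆ Tᶜ ∧ ∀ ⦃u v⦄, u ∈ A → v ∉ T → G.Adj u v → v ∈ A

variable {G : SimpleGraph α} {T A : Set α}

lemma IsComponentUnion.mem_of_reachable (hA : G.IsComponentUnion T A) {x y : ↥Tᶜ}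
    (h : (G.induce Tᶜ).Reachable x y) (hx : x.1 ∈ A) : y.1 ∈ A := by
  obtain ⟨w⟩ := h
  induction w with
  | nil => exact hx
  | @cons _ v _ hadj _ ih => exact ih (hA.2 hx v.2 hadj)

lemma isVertexCut_of_isComponentUnion {x y : α} (hA : G.IsComponentUnion T A) (hx : x ∈ A)
    (hy : y ∉ T) (hyA : y ∉ A) : G.IsVertexCut T := fun hconn =>
  hyA <| hA.mem_of_reachable (hconn.preconnected ⟨x, hA.1 hx⟩ ⟨y, hy⟩) hx

lemma isVertexCut_iff :
    G.IsVertexCut T ↔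
      T = univ ∨ ∃ A x y, G.IsComponentUnion T A ∧ x ∈ A ∧ y ∉ T ∧ y ∉ A := by
  constructor
  · intro h
    rcases eq_or_ne T univ with rfl | hT
    · exact .inl rfl
    obtain ⟨z, hz⟩ := (ne_univ_iff_exists_notMem T).1 hT
    have : Nonempty ↥Tᶜ := ⟨⟨z, hz⟩⟩
    obtain ⟨x, y, hxy⟩ : ∃ x y : ↥Tᶜ, ¬ (G.induce Tᶜ).Reachable x y := by
      by_contra! hpre
      exact h ⟨hpre⟩
    refine .inr ⟨{v | ∃ hv : v ∉ T, (G.induce Tᶜ).Reachable x ⟨v, hv⟩}, x, y,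
      ⟨fun v hv => hv.1, fun _ v ⟨_, hxu⟩ hv hadj => ⟨hv, hxu.trans (Adj.reachable hadj)⟩⟩,
      ⟨x.2, .rfl⟩, y.2, fun ⟨_, hxy'⟩ => hxy hxy'⟩
  · rintro (rfl | ⟨A, x, y, hA, hx, hy, hyA⟩)
    · exact fun hconn => hconn.nonempty.elim fun v => v.2 trivial
    · exact isVertexCut_of_isComponentUnion hA hx hy hyA

lemma isVertexCut_of_forall_adj_mem {x y : α} (hx : x ∉ T) (hy : y ∉ T) (hxy : x ≠ y)
    (h : ∀ z, G.Adj x z → z ∈ T) : G.IsVertexCut T :=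
  isVertexCut_of_isComponentUnion (A := {x}) ⟨singleton_subset_iff.2 hx,
    fun _ v hu hv hadj => (hv (h v (mem_singleton_iff.1 hu ▸ hadj))).elim⟩ rfl hy hxy.symm

lemma IsComponentUnion.compl_sdiff (hA : G.IsComponentUnion T A) :
    G.IsComponentUnion T (Tᶜ \ A) :=
  ⟨sdiff_subset, fun _ _ hu hv hadj => ⟨hv, fun hvA => hu.2 (hA.2 hvA hu.1 hadj.symm)⟩⟩

lemma IsVertexCut.tensorProd_prod_univ [Nonempty β] (H : SimpleGraph β) (h : G.IsVertexCut T) :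
    (G.tensorProd H).IsVertexCut (T ×ˢ univ) := by
  rcases isVertexCut_iff.1 h with rfl | ⟨A, x, y, hA, hx, hy, hyA⟩
  · exact isVertexCut_iff.2 (.inl univ_prod_univ)
  obtain ⟨b⟩ := ‹Nonempty β›
  refine isVertexCut_of_isComponentUnion (A := A ×ˢ univ) (x := (x, b)) (y := (y, b))
    ⟨fun p hp hpT => hA.1 hp.1 hpT.1, fun p q hp hq hadj => ⟨hA.2 hp.1 ?_ hadj.1, trivial⟩⟩
    ⟨hx, trivial⟩ (fun h => hy h.1) (fun h => hyA h.1)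
  exact fun h => hq ⟨h, trivial⟩

lemma vConn_le_ncard (h : G.IsVertexCut T) : G.vConn ≤ T.ncard :=
  Nat.sInf_le ⟨T, rfl, .inl h⟩

lemma vConn_le_natCard_sub_one : G.vConn ≤ Nat.card α - 1 := by
  obtain ⟨T, -, hT⟩ := exists_subset_card_eq (s := (univ : Set α)) (n := Nat.card α - 1)
    (by rw [ncard_univ]; omega)
  exact Nat.sInf_le ⟨T, hT, .inr (by omega)⟩

lemma vConn_eq_zero_of_natCard_eq_zero (h : Nat.card α = 0) : G.vConn = 0 := by
  simpa [h] using G.vConn_le_natCard_sub_one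

lemma exists_ncard_eq_vConn :
    ∃ T : Set α, T.ncard = G.vConn ∧ (G.IsVertexCut T ∨ Nat.card α ≤ G.vConn + 1) :=
  Nat.sInf_mem (s := {n | ∃ T : Set α, T.ncard = n ∧ (G.IsVertexCut T ∨ Nat.card α ≤ n + 1)})
    ⟨_, univ, rfl, .inr (by rw [ncard_univ]; omega)⟩

lemma minDeg_le_ncard_neighborSet (u : α) : G.minDeg ≤ (G.neighborSet u).ncard :=
  Nat.sInf_le ⟨u, rfl⟩

lemma exists_ncard_neighborSet_eq_minDeg [Nonempty α] :
    ∃ v, (G.neighborSet v).ncard = G.minDeg :=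
  Nat.sInf_mem (s := {d | ∃ v, (G.neighborSet v).ncard = d}) ⟨_, Classical.arbitrary α, rfl⟩

lemma vConn_tensorProd_le_natCard_mul_vConn [Finite α] [Nonempty α] [Nontrivial β]
    (H : SimpleGraph β) : (G.tensorProd H).vConn ≤ Nat.card β * G.vConn := by
  obtain ⟨T, hT, hcut | hsmall⟩ := G.exists_ncard_eq_vConn
  · calc (G.tensorProd H).vConn ≤ (T ×ˢ (univ : Set β)).ncard :=
          vConn_le_ncard (hcut.tensorProd_prod_univ H)
      _ = Nat.card β * G.vConn := by rw [ncard_prod, ncard_univ, hT, mul_comm]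
  obtain ⟨u⟩ := ‹Nonempty α›
  obtain ⟨b, c, hbc⟩ := exists_pair_ne β
  have hcut : (G.tensorProd H).IsVertexCut (({u}ᶜ : Set α) ×ˢ (univ : Set β)) :=
    isVertexCut_of_forall_adj_mem (x := (u, b)) (y := (u, c)) (by simp) (by simp)
      (by simpa using hbc) fun z hadj => ⟨(G.ne_of_adj hadj.1).symm, trivial⟩
  calc (G.tensorProd H).vConn ≤ (Nat.card α - 1) * Nat.card β := by
        simpa only [ncard_prod, ncard_univ, ncard_compl {u}, ncard_singleton] using
          vConn_le_ncard hcut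
    _ ≤ Nat.card β * G.vConn := by rw [mul_comm]; gcongr; omega

lemma vConn_tensorProd_top_le_mul_minDeg [Nonempty α] [Finite β] [Nontrivial β] :
    (G.tensorProd (⊤ : SimpleGraph β)).vConn ≤ (Nat.card β - 1) * G.minDeg := by
  obtain ⟨v, hv⟩ := G.exists_ncard_neighborSet_eq_minDeg
  obtain ⟨b, c, hbc⟩ := exists_pair_ne β
  have hcut : (G.tensorProd ⊤).IsVertexCut (G.neighborSet v ×ˢ ({b}ᶜ : Set β)) :=
    isVertexCut_of_forall_adj_mem (x := (v, b)) (y := (v, c)) (fun h => G.irrefl h.1)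
      (fun h => G.irrefl h.1) (by simpa using hbc) fun z hadj => ⟨hadj.1, Ne.symm hadj.2⟩
  simpa only [ncard_prod, ncard_compl {b}, ncard_singleton, hv, mul_comm] using
    vConn_le_ncard hcut

end Cuts

lemma minDeg_le_card_neighborFinset {G : SimpleGraph α} (u : α) [Fintype (G.neighborSet u)] :
    G.minDeg ≤ (G.neighborFinset u).card := by
  rw [← ncard_coe_finset, coe_neighborFinset]
  exact G.minDeg_le_ncard_neighborSet u

lemma CliqueFree.disjoint_neighborFinset {G : SimpleGraph α} (hG : G.CliqueFree 3) {u w : α}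
    [Fintype (G.neighborSet u)] [Fintype (G.neighborSet w)] (h : G.Adj u w) :
    Disjoint (G.neighborFinset u) (G.neighborFinset w) := by
  classical
  exact Finset.disjoint_left.2 fun x hu hw =>
    hG {u, w, x} (is3Clique_triple_iff.2 ⟨h, (mem_neighborFinset ..).1 hu,
      (mem_neighborFinset ..).1 hw⟩)

lemma IsComponentUnion.mem_of_adj {G : SimpleGraph α} {T C : Set (α × β)} {u w : α} {i k : β}
    (hC : (G.tensorProd ⊤).IsComponentUnion T C) (hu : (u, i) ∈ C) (hw : (w, k) ∉ T)
    (hadj : G.Adj u w) (hik : i ≠ k) : (w, k) ∈ C :=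
  hC.2 hu hw ⟨hadj, hik⟩

lemma IsComponentUnion.mem_of_split {G : SimpleGraph α} {T C : Set (α × β)} {u w : α}
    {i j k : β} (hC : (G.tensorProd ⊤).IsComponentUnion T C) (hi : (u, i) ∈ C) (hj : (u, j) ∉ T)
    (hjC : (u, j) ∉ C) (hadj : G.Adj u w) (hki : k ≠ i) (hkj : k ≠ j) : (w, k) ∈ T := by
  by_contra hw
  exact hjC (hC.mem_of_adj (hC.mem_of_adj hi hw hadj hki.symm) hj hadj.symm hkj)

def boundaryTo (G : SimpleGraph α) (X Y : Set α) : Set α := {u ∈ X | ∃ w ∈ Y, G.Adj u w}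

section TensorTop

variable [Fintype β] [DecidableEq α] [DecidableEq β] {G : SimpleGraph α}
  {S : Finset (α × β)} {C : Set (α × β)} {u v w : α} {i j k : β} {m : ℕ}

lemma IsComponentUnion.card_sub_two_le_card_fiber (hC : (G.tensorProd ⊤).IsComponentUnion S C)
    (hi : (u, i) ∈ C) (hj : (u, j) ∉ S) (hjC : (u, j) ∉ C) (hadj : G.Adj u w) :
    Fintype.card β - 2 ≤ (S.fiber w).card := by
  refine le_trans ?_ (S.card_sub_card_le_card_fiber {i, j} fun k hk => ?_)
  · have := Finset.card_le_two (a := i) (b := j)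
    omega
  · simp only [Finset.mem_insert, Finset.mem_singleton, not_or] at hk
    exact hC.mem_of_split hi hj hjC hadj hk.1 hk.2

variable [Fintype α]

lemma minDeg_mul_le_card_of_forall_adj (h : ∀ w, G.Adj u w → m ≤ (S.fiber w).card) :
    m * G.minDeg ≤ S.card := by
  classical
  rw [mul_comm]
  calc G.minDeg * m ≤ (G.neighborFinset u).card * m := by
        gcongr; exact minDeg_le_card_neighborFinset u
    _ ≤ S.card := Finset.card_mul_le_card_of_le_card_fiber fun w hw => h w (by simpa using hw)

lemma IsComponentUnion.mem_of_mem_of_notMem (hG : G.CliqueFree 3) (hβ : 3 ≤ Fintype.card β)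
    (hS : S.card < (Fintype.card β - 1) * G.minDeg)
    (hC : (G.tensorProd ⊤).IsComponentUnion S C) (hi : (u, i) ∈ C) (hj : (u, j) ∉ S) :
    (u, j) ∈ C := by
  classical
  by_contra hjC
  have hij : i ≠ j := by rintro rfl; exact hjC hi
  by_cases hsplit : ∃ w, G.Adj u w ∧ (w, i) ∉ S ∧ (w, j) ∉ S
  · obtain ⟨w, hadj, hwi, hwj⟩ := hsplit
    -- `w` is split as well, with the roles of `i` and `j` exchanged
    have hwjC : (w, j) ∈ C := hC.mem_of_adj hi hwj hadj hij
    have hwiC : (w, i) ∉ C := fun h => hjC (hC.mem_of_adj h hj hadj.symm hij)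
    have hbound : (G.neighborFinset u ∪ G.neighborFinset w).card * (Fintype.card β - 2) ≤
        S.card := Finset.card_mul_le_card_of_le_card_fiber fun x hx => by
      rcases Finset.mem_union.1 hx with hx | hx
      · exact hC.card_sub_two_le_card_fiber hi hj hjC ((mem_neighborFinset ..).1 hx)
      · exact hC.card_sub_two_le_card_fiber hwjC hwi hwiC ((mem_neighborFinset ..).1 hx)
    rw [Finset.card_union_of_disjoint (hG.disjoint_neighborFinset hadj)] at hbound
    have hu := minDeg_le_card_neighborFinset (G := G) u
    have hw := minDeg_le_card_neighborFinset (G := G) w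
    obtain ⟨n, hn⟩ : ∃ n, Fintype.card β = n + 3 := ⟨_, (Nat.sub_add_cancel hβ).symm⟩
    rw [hn] at hS hbound
    simp only [show n + 3 - 2 = n + 1 by omega,
      show n + 3 - 1 = n + 2 by omega] at hS hbound
    -- `2 δ (n - 2) ≥ (n - 1) δ` as `n ≥ 3`
    nlinarith
  · refine (hS.trans_le (minDeg_mul_le_card_of_forall_adj (u := u) fun w hadj => ?_)).false
    by_cases hwi : (w, i) ∈ S
    · refine S.card_sub_one_le_card_fiber (i := j) fun k hkj => ?_
      rcases eq_or_ne k i with rfl | hki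
      exacts [hwi, hC.mem_of_split hi hj hjC hadj hki hkj]
    · have hwj : (w, j) ∈ S := by_contra fun hwj => hsplit ⟨w, hadj, hwi, hwj⟩
      refine S.card_sub_one_le_card_fiber (i := i) fun k hki => ?_
      rcases eq_or_ne k j with rfl | hkj
      exacts [hwj, hC.mem_of_split hi hj hjC hadj hki hkj]

lemma IsComponentUnion.notMem_image_fst_sdiff (hG : G.CliqueFree 3) (hβ : 3 ≤ Fintype.card β)
    (hS : S.card < (Fintype.card β - 1) * G.minDeg)
    (hC : (G.tensorProd ⊤).IsComponentUnion S C) (hu : u ∈ Prod.fst '' C) :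
    u ∉ Prod.fst '' ((↑S)ᶜ \ C) := by
  rintro ⟨⟨_, j⟩, ⟨hj, hjC⟩, rfl⟩
  obtain ⟨⟨_, i⟩, hi, rfl⟩ := hu
  exact hjC (hC.mem_of_mem_of_notMem hG hβ hS hi hj)

lemma IsComponentUnion.card_sub_one_le_card_fiber_of_adj (hG : G.CliqueFree 3)
    (hβ : 3 ≤ Fintype.card β) (hS : S.card < (Fintype.card β - 1) * G.minDeg)
    (hC : (G.tensorProd ⊤).IsComponentUnion S C) (hu : u ∈ Prod.fst '' C)
    (hv : v ∈ Prod.fst '' ((↑S)ᶜ \ C)) (hadj : G.Adj u v) :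
    Fintype.card β - 1 ≤ (S.fiber u).card ∧ Fintype.card β - 1 ≤ (S.fiber v).card := by
  have hvC : ∀ k, (v, k) ∉ C := fun k hk => hC.notMem_image_fst_sdiff hG hβ hS ⟨_, hk, rfl⟩ hv
  obtain ⟨⟨u, i⟩, hi, rfl⟩ := hu
  obtain ⟨⟨v, j⟩, ⟨hj, -⟩, rfl⟩ := hv
  have hvS : ∀ k ≠ i, (v, k) ∈ S := fun k hk =>
    by_contra fun h => hvC k (hC.mem_of_adj hi h hadj hk.symm)
  obtain rfl : j = i := by_contra fun h => hj (hvS j h)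
  refine ⟨S.card_sub_one_le_card_fiber (i := j) fun k hk => by_contra fun h => ?_,
    S.card_sub_one_le_card_fiber hvS⟩
  exact hvC j (hC.mem_of_adj (hC.mem_of_mem_of_notMem hG hβ hS hi h) hj hadj hk)

lemma IsComponentUnion.exists_forall_adj_notMem (hG : G.CliqueFree 3) (hβ : 3 ≤ Fintype.card β)
    (hS : S.card < (Fintype.card β - 1) * G.minDeg)
    (hC : (G.tensorProd ⊤).IsComponentUnion S C) (hne : C.Nonempty) :
    ∃ u ∈ Prod.fst '' C, ∀ w, G.Adj u w → w ∉ Prod.fst '' ((↑S)ᶜ \ C) := by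
  by_contra! h
  obtain ⟨⟨u, i⟩, hu⟩ := hne
  refine (hS.trans_le (minDeg_mul_le_card_of_forall_adj (u := u) fun x hadj => ?_)).false
  by_cases hx : x ∈ Prod.fst '' C
  · obtain ⟨w, hxw, hw⟩ := h x hx
    exact (hC.card_sub_one_le_card_fiber_of_adj hG hβ hS hx hw hxw).1
  by_cases hx' : x ∈ Prod.fst '' ((↑S)ᶜ \ C)
  · exact (hC.card_sub_one_le_card_fiber_of_adj hG hβ hS ⟨_, hu, rfl⟩ hx' hadj).2
  have hdead : ∀ k, (x, k) ∈ S := fun k => by_contra fun hk =>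
    (mem_image_fst_or_mem_image_fst_sdiff hk).elim hx hx'
  exact (Nat.sub_le _ _).trans (S.card_le_card_fiber hdead)

lemma IsComponentUnion.vConn_le (hG : G.CliqueFree 3) (hβ : 3 ≤ Fintype.card β)
    (hS : S.card < (Fintype.card β - 1) * G.minDeg)
    (hC : (G.tensorProd ⊤).IsComponentUnion S C) (hu : u ∈ Prod.fst '' C)
    (hu' : ∀ w, G.Adj u w → w ∉ Prod.fst '' ((↑S)ᶜ \ C)) {y : α × β} (hy : y ∈ (↑S)ᶜ \ C) :
    G.vConn ≤ {x | ∀ k, (x, k) ∈ S}.ncard +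
      (G.boundaryTo (Prod.fst '' C) (Prod.fst '' ((↑S)ᶜ \ C))).ncard := by
  set T := G.boundaryTo (Prod.fst '' C) (Prod.fst '' ((↑S)ᶜ \ C))
  have hy' : y.1 ∈ Prod.fst '' ((↑S)ᶜ \ C) := ⟨y, hy, rfl⟩
  refine (vConn_le_ncard (T := {x | ∀ k, (x, k) ∈ S} ∪ T) ?_).trans (ncard_union_le _ _)
  refine isVertexCut_of_isComponentUnion (A := Prod.fst '' C \ T) (x := u) (y := y.1)
    ⟨fun x hx hxT => ?_, fun x v hx hv hadj => ?_⟩ ⟨hu, fun h => ?_⟩ ?_ ?_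
  · obtain ⟨k, hk⟩ := exists_notMem_of_mem_image_fst hC.1 hx.1
    exact hxT.elim (fun h => hk (h k)) hx.2
  · obtain ⟨k, hk⟩ : ∃ k, (v, k) ∉ S := by
      by_contra! h
      exact hv (.inl h)
    rcases mem_image_fst_or_mem_image_fst_sdiff (C := C) hk with hvC | hvC'
    · exact ⟨hvC, fun h => hv (.inr h)⟩
    · exact (hx.2 ⟨hx.1, v, hvC', hadj⟩).elim
  · obtain ⟨-, w, hw, hadj⟩ := h
    exact hu' w hadj hw
  · rintro (h | h)
    · exact hy.1 (h y.2)
    · exact hC.notMem_image_fst_sdiff hG hβ hS h.1 hy'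
  · exact fun h => hC.notMem_image_fst_sdiff hG hβ hS h.1 hy'

lemma IsComponentUnion.ncard_mul_add_le_card (hG : G.CliqueFree 3) (hβ : 3 ≤ Fintype.card β)
    (hS : S.card < (Fintype.card β - 1) * G.minDeg)
    (hC : (G.tensorProd ⊤).IsComponentUnion S C) :
    {x | ∀ k, (x, k) ∈ S}.ncard * Fintype.card β +
      ((G.boundaryTo (Prod.fst '' C) (Prod.fst '' ((↑S)ᶜ \ C))).ncard +
        (G.boundaryTo (Prod.fst '' ((↑S)ᶜ \ C)) (Prod.fst '' C)).ncard) *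
        (Fintype.card β - 1) ≤ S.card := by
  have hT : Disjoint (G.boundaryTo (Prod.fst '' C) (Prod.fst '' ((↑S)ᶜ \ C)))
      (G.boundaryTo (Prod.fst '' ((↑S)ᶜ \ C)) (Prod.fst '' C)) :=
    Set.disjoint_left.2 fun x hx hx' => hC.notMem_image_fst_sdiff hG hβ hS hx.1 hx'.1
  rw [← ncard_union_eq hT]
  refine Finset.ncard_mul_add_ncard_mul_le_card (Set.disjoint_left.2 fun x hx hxT => ?_)
    (fun x hx => S.card_le_card_fiber hx) fun x hxT => ?_
  · obtain ⟨k, hk⟩ := hxT.elim (fun h => exists_notMem_of_mem_image_fst hC.1 h.1)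
      (fun h => exists_notMem_of_mem_image_fst hC.compl_sdiff.1 h.1)
    exact hk (hx k)
  · rcases hxT with ⟨hx, w, hw, hadj⟩ | ⟨hx, w, hw, hadj⟩
    · exact (hC.card_sub_one_le_card_fiber_of_adj hG hβ hS hx hw hadj).1
    · exact (hC.card_sub_one_le_card_fiber_of_adj hG hβ hS hw hx hadj.symm).2

theorem not_isVertexCut_tensorProd_top (hG : G.CliqueFree 3) (hβ : 3 ≤ Fintype.card β)
    (hκ : S.card < Fintype.card β * G.vConn) (hδ : S.card < (Fintype.card β - 1) * G.minDeg) :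
    ¬ (G.tensorProd ⊤).IsVertexCut (S : Set (α × β)) := by
  intro hcut
  rcases isVertexCut_iff.1 hcut with hS | ⟨C, x, y, hC, hx, hy, hyC⟩
  · have hcard : S.card = Fintype.card α * Fintype.card β := by
      rw [Finset.coe_eq_univ.1 hS, Finset.card_univ, Fintype.card_prod]
    have := G.vConn_le_natCard_sub_one
    rw [Nat.card_eq_fintype_card] at this
    have : Fintype.card β * G.vConn ≤ Fintype.card β * Fintype.card α :=
      Nat.mul_le_mul_left _ (this.trans (Nat.sub_le _ _))
    rw [hcard, mul_comm] at hκ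
    omega
  have hC' := hC.compl_sdiff
  have hC'' : (↑S)ᶜ \ ((↑S)ᶜ \ C) = C := sdiff_sdiff_cancel_left hC.1
  obtain ⟨u, hu, hu'⟩ := hC.exists_forall_adj_notMem hG hβ hδ ⟨x, hx⟩
  obtain ⟨v, hv, hv'⟩ := hC'.exists_forall_adj_notMem hG hβ hδ ⟨y, hy, hyC⟩
  have hκ₁ := hC.vConn_le hG hβ hδ hu hu' ⟨hy, hyC⟩
  have hκ₂ := hC'.vConn_le hG hβ hδ hv hv' (hC''.symm ▸ hx)
  have hcount := hC.ncard_mul_add_le_card hG hβ hδ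
  rw [hC''] at hκ₂
  obtain ⟨n, hn⟩ : ∃ n, Fintype.card β = n + 3 := ⟨_, (Nat.sub_add_cancel hβ).symm⟩
  rw [hn] at hcount hκ
  simp only [show n + 3 - 1 = n + 2 by omega] at hcount
  -- with `d` dead vertices and boundaries of sizes `t₁`, `t₂`: `κ ≤ d + t₁`, `κ ≤ d + t₂` and
  -- `n d + (n - 1) (t₁ + t₂) ≤ |S| < n κ` are incompatible because `2 (n - 1) ≥ n`
  nlinarith

theorem min_le_vConn_tensorProd_top [Nonempty α] (hG : G.CliqueFree 3)
    (hβ : 3 ≤ Fintype.card β) :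
    min (Fintype.card β * G.vConn) ((Fintype.card β - 1) * G.minDeg) ≤
      (G.tensorProd (⊤ : SimpleGraph β)).vConn := by
  classical
  obtain ⟨S, hS, hcut | hsmall⟩ := (G.tensorProd (⊤ : SimpleGraph β)).exists_ncard_eq_vConn
  · rw [← hS, ncard_eq_toFinset_card']
    by_contra! h
    rw [lt_min_iff] at h
    exact not_isVertexCut_tensorProd_top hG hβ h.1 h.2 (by rwa [coe_toFinset])
  · refine min_le_of_left_le ?_
    have hκ := G.vConn_le_natCard_sub_one
    simp only [Nat.card_eq_fintype_card, Fintype.card_prod] at hsmall hκ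
    have : Fintype.card β * (G.vConn + 1) ≤ Fintype.card β * Fintype.card α :=
      Nat.mul_le_mul_left _ (by have := Fintype.card_pos (α := α); omega)
    nlinarith

end TensorTop

end SimpleGraph

theorem stmt_2_general (G : SimpleGraph α) (hGb : G.Colorable 2)
    (n : ℕ) (hn : 3 ≤ n) :
    (G.tensorProd (⊤ : SimpleGraph (Fin n))).vConn =
      min (n * G.vConn) ((n - 1) * G.minDeg) := by
  rcases eq_or_ne (Nat.card α) 0 with h0 | h0
  · -- `α` is empty or infinite, and both connectivities are the junk value `0`
    rw [vConn_eq_zero_of_natCard_eq_zero h0,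
      vConn_eq_zero_of_natCard_eq_zero (by simp [Nat.card_prod, h0])]
    simp
  obtain ⟨_, _⟩ := Nat.card_ne_zero.1 h0
  classical
  have : Fintype α := Fintype.ofFinite α
  have : Nontrivial (Fin n) := Fin.nontrivial_iff_two_le.2 (by omega)
  refine le_antisymm (le_min ?_ ?_) ?_
  · simpa using G.vConn_tensorProd_le_natCard_mul_vConn (⊤ : SimpleGraph (Fin n))
  · simpa using G.vConn_tensorProd_top_le_mul_minDeg (β := Fin n)
  · simpa using G.min_le_vConn_tensorProd_top (β := Fin n) (hGb.cliqueFree (by norm_num))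
      (by simpa using hn)

/-- For a connected bipartite graph G and n ≥ 3,
κ(G × K_n) = min{n·κ(G), (n-1)·δ(G)}. -/
theorem stmt_2 (G : SimpleGraph α) (hGc : G.Connected) (hGb : G.Colorable 2)
    (n : ℕ) (hn : 3 ≤ n) :
    (G.tensorProd (⊤ : SimpleGraph (Fin n))).vConn =
      min (n * G.vConn) ((n - 1) * G.minDeg) :=
  stmt_2_general G hGb n hn
end

section
/- Let G be a connected non-bipartite graph and n ≥ 7 an odd integer. If κ(G × K_2) > (4/(n−1))·δ(G), then G × C_n is super connected. -/
open SimpleGraph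

universe u v

variable {α : Type u} {β : Type v}

/-!
Let `S` be a minimum vertex cut of `P = G × Cₙ`, write `δ = δ(G)`, `κ = κ(G × K₂)`, and let
`S_i ⊆ V(G)` be the layer of `S` over `i ∈ Cₙ`. A vertex neighbourhood is a cut, so `|S| ≤ 2δ`.
Mapping `G × K₂` onto two consecutive layers shows that whenever two different components of
`P - S` both meet the layers `i, i + 1`, we get `κ ≤ |S_i| + |S_{i+1}|`.

Take a vertex `x` of a component `K` of `P - S`. If all neighbours of `x` lie in `S`, then
`S = N(x)` since `|N(x)| ≥ 2δ ≥ |S|`. Otherwise `K` has an edge between two consecutive layers.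
If `K` also misses two layers, the layers it misses include two distinct boundary layers, and
each contains the `G`-neighbourhood of a vertex of `K`, hence at least `δ` vertices of `S`. So
`S` lies in these two layers, the rest of `P - S` spreads over every layer, and the pair bound
at the edge of `K` gives `κ = 0`. Hence, unless `S` is a neighbourhood, two components each miss
at most one layer, and summing the pair bound over all `i` gives `n κ ≤ 2|S| ≤ 4δ`, contradicting
`4δ < (n - 1) κ`.
-/

open scoped Fin.NatCast

namespace SimpleGraph

variable {V W W' : Type*}

section Connectivity

variable (H : SimpleGraph V)

theorem vConn_le_ncard_s14 {S : Set V} (hS : H.IsVertexCut S) : H.vConn ≤ S.ncard :=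
  Nat.sInf_le ⟨S, rfl, Or.inl hS⟩

theorem minDeg_le_ncard_neighborSet_s14 (v : V) : H.minDeg ≤ (H.neighborSet v).ncard :=
  Nat.sInf_le ⟨v, rfl⟩

theorem exists_ncard_neighborSet_eq_minDeg_s14 [Nonempty V] :
    ∃ v, (H.neighborSet v).ncard = H.minDeg :=
  Nat.sInf_mem (s := {d | ∃ v, (H.neighborSet v).ncard = d}) ⟨_, Classical.arbitrary V, rfl⟩

theorem minDeg_lt_card [Finite V] [Nonempty V] : H.minDeg < Nat.card V := by
  obtain ⟨v, hv⟩ := H.exists_ncard_neighborSet_eq_minDeg_s14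
  exact hv ▸ Set.ncard_lt_card fun h =>
    H.loopless.irrefl v (h.symm ▸ Set.mem_univ v : v ∈ H.neighborSet v)

theorem isVertexCut_neighborSet {v w : V} (hwv : w ≠ v) (hw : ¬ H.Adj v w) :
    H.IsVertexCut (H.neighborSet v) := by
  intro hconn
  have hv : v ∈ (H.neighborSet v)ᶜ := H.loopless.irrefl v
  have : Nontrivial ((H.neighborSet v)ᶜ : Set V) :=
    ⟨⟨v, hv⟩, ⟨w, hw⟩, fun h => hwv (congrArg Subtype.val h).symm⟩
  obtain ⟨u, hu⟩ := hconn.preconnected.exists_adj_of_nontrivial ⟨v, hv⟩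
  exact u.2 hu

variable {H}

theorem one_lt_card_of_vConn_pos (h : 0 < H.vConn) : 1 < Nat.card V := by
  by_contra! hle
  have : H.vConn ≤ 0 := Nat.sInf_le ⟨∅, Set.ncard_empty V, Or.inr hle⟩
  omega

theorem finite_of_vConn_pos (h : 0 < H.vConn) : Finite V :=
  Nat.finite_of_card_ne_zero (one_pos.trans (one_lt_card_of_vConn_pos h)).ne'

theorem nontrivial_of_vConn_pos (h : 0 < H.vConn) : Nontrivial V :=
  have := finite_of_vConn_pos h
  Finite.one_lt_card_iff_nontrivial.mp (one_lt_card_of_vConn_pos h)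

theorem exists_adj_of_vConn_pos (h : 0 < H.vConn) (v : V) : ∃ w, H.Adj v w := by
  have hconn : (H.induce (∅ : Set V)ᶜ).Connected := by
    by_contra hcut
    have : H.vConn ≤ 0 := Nat.sInf_le ⟨∅, Set.ncard_empty V, Or.inl hcut⟩
    omega
  rw [Set.compl_empty, (induceUnivIso H).connected_iff] at hconn
  have := nontrivial_of_vConn_pos h
  exact hconn.preconnected.exists_adj_of_nontrivial v

theorem isVertexCut_preimage {H' : SimpleGraph W} (f : H' →g H) {S : Set V} {x y : W}
    (hx : f x ∉ S) (hy : f y ∉ S) (hxy : ¬ (H.induce Sᶜ).Reachable ⟨f x, hx⟩ ⟨f y, hy⟩) :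
    H'.IsVertexCut (f ⁻¹' S) := by
  intro hconn
  let F : H'.induce (f ⁻¹' S)ᶜ →g H.induce Sᶜ := ⟨fun p => ⟨f p, p.2⟩, f.map_adj⟩
  exact hxy ((hconn.preconnected ⟨x, hx⟩ ⟨y, hy⟩).map F)

variable (H) in
def IsUnionOfComponentsOff (S K : Set V) : Prop :=
  K ⊆ Sᶜ ∧ ∀ ⦃y z⦄, y ∈ K → z ∉ S → H.Adj y z → z ∈ K

variable {S K : Set V}

theorem IsUnionOfComponentsOff.compl_diff (hK : H.IsUnionOfComponentsOff S K) :
    H.IsUnionOfComponentsOff S (Sᶜ \ K) :=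
  ⟨Set.sdiff_subset, fun _ _ hy hz hyz => ⟨hz, fun hzK => hy.2 (hK.2 hzK hy.1 hyz.symm)⟩⟩

theorem IsUnionOfComponentsOff.not_reachable (hK : H.IsUnionOfComponentsOff S K)
    {x y : (Sᶜ : Set V)} (hx : x.1 ∈ K) (hy : y.1 ∉ K) : ¬ (H.induce Sᶜ).Reachable x y := by
  rintro ⟨p⟩
  induction p with
  | nil => exact hy hx
  | cons h _ ih => exact ih (hK.2 hx (Subtype.prop _ : _ ∈ Sᶜ) h) hy

theorem isUnionOfComponentsOff_reachable (c : (Sᶜ : Set V)) :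
    H.IsUnionOfComponentsOff S (Subtype.val '' {v | (H.induce Sᶜ).Reachable c v}) := by
  refine ⟨fun _ ⟨v, _, hv⟩ => hv ▸ v.2, ?_⟩
  rintro _ z ⟨y, hcy, rfl⟩ hz hyz
  exact ⟨⟨z, hz⟩, hcy.trans (Adj.reachable (G := H.induce Sᶜ) hyz), rfl⟩

theorem disjoint_image_reachable {c d : (Sᶜ : Set V)} (hcd : ¬ (H.induce Sᶜ).Reachable c d) :
    Disjoint (Subtype.val '' {v | (H.induce Sᶜ).Reachable c v})
      (Subtype.val '' {v | (H.induce Sᶜ).Reachable d v}) := by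
  rw [Set.disjoint_left]
  rintro _ ⟨v, hcv, rfl⟩ ⟨w, hdw, hwv⟩
  exact hcd (hcv.trans (Subtype.ext hwv ▸ hdw.symm))

end Connectivity

section TensorProd

variable (G : SimpleGraph V) {H : SimpleGraph W}

theorem neighborSet_tensorProd (a : V) (b : W) :
    (G.tensorProd H).neighborSet (a, b) = G.neighborSet a ×ˢ H.neighborSet b := rfl

def tensorProdMapRight {H' : SimpleGraph W'} (f : H' →g H) :
    G.tensorProd H' →g G.tensorProd H where
  toFun := Prod.map id f
  map_rel' h := ⟨h.1, f.map_adj h.2⟩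

def homOfAdj {b₀ b₁ : W} (h : H.Adj b₀ b₁) : (⊤ : SimpleGraph (Fin 2)) →g H where
  toFun := ![b₀, b₁]
  map_rel' {i j} hij := by
    fin_cases i <;> fin_cases j <;> simp_all [h.symm]

end TensorProd

end SimpleGraph

namespace Set

variable {V W : Type*}

def layer (S : Set (V × W)) (b : W) : Set V := {a | (a, b) ∈ S}

theorem ncard_eq_sum_ncard_layer [Finite V] [Fintype W] (S : Set (V × W)) :
    S.ncard = ∑ b, (S.layer b).ncard := by
  let e : S ≃ Σ b, S.layer b :=
    { toFun := fun p => ⟨p.1.2, p.1.1, p.2⟩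
      invFun := fun q => ⟨(q.2.1, q.1), q.2.2⟩
      left_inv := fun _ => rfl
      right_inv := fun _ => rfl }
  rw [← Nat.card_coe_set_eq, Nat.card_congr e, Nat.card_sigma]
  simp only [Nat.card_coe_set_eq]

theorem layer_eq_empty_of_two_mul_le [Finite V] [Fintype W] {S : Set (V × W)} {d : ℕ} {r₁ r₂ : W}
    (hr : r₁ ≠ r₂) (h₁ : d ≤ (S.layer r₁).ncard) (h₂ : d ≤ (S.layer r₂).ncard)
    (hS : S.ncard ≤ 2 * d) :
    (S.layer r₁).ncard ≤ d ∧ (S.layer r₂).ncard ≤ d ∧ ∀ i ∉ ({r₁, r₂} : Set W), S.layer i = ∅ := by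
  classical
  have hsplit : ∑ i ∈ {r₁, r₂}ᶜ, (S.layer i).ncard + ((S.layer r₁).ncard + (S.layer r₂).ncard)
      = S.ncard := by
    rw [← Finset.sum_pair (f := fun i => (S.layer i).ncard) hr, Finset.sum_compl_add_sum,
      ncard_eq_sum_ncard_layer]
  refine ⟨by omega, by omega, fun i hi => ?_⟩
  have h0 : ∑ i ∈ {r₁, r₂}ᶜ, (S.layer i).ncard = 0 := by omega
  exact (ncard_eq_zero).mp <| Finset.sum_eq_zero_iff.mp h0 i (by simpa using hi)

theorem mem_image_snd_diff_of_ncard_layer_lt {S K : Set (V × W)} {r : W}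
    (hS : (S.layer r).ncard < Nat.card V) (hK : r ∉ Prod.snd '' K) :
    r ∈ Prod.snd '' (Sᶜ \ K) := by
  obtain ⟨c, hc⟩ : ∃ c, c ∉ S.layer r := by
    by_contra! h
    rw [eq_univ_of_forall h, ncard_univ] at hS
    exact hS.false
  exact ⟨(c, r), ⟨hc, fun h => hK ⟨_, h, rfl⟩⟩, rfl⟩

end Set

namespace SimpleGraph

variable {V W : Type*} [Finite V] (G : SimpleGraph V) {H : SimpleGraph W} {S K : Set (V × W)}

theorem vConn_tensorProd_top_le {b₀ b₁ : W} (hb : H.Adj b₀ b₁) {x y : V × W}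
    (hx : x ∉ S) (hy : y ∉ S) (hxl : x.2 = b₀ ∨ x.2 = b₁) (hyl : y.2 = b₀ ∨ y.2 = b₁)
    (hxy : ¬ ((G.tensorProd H).induce Sᶜ).Reachable ⟨x, hx⟩ ⟨y, hy⟩) :
    (G.tensorProd (⊤ : SimpleGraph (Fin 2))).vConn ≤ (S.layer b₀).ncard + (S.layer b₁).ncard := by
  set F := G.tensorProdMapRight (homOfAdj hb)
  have hlift : ∀ p : V × W, (p.2 = b₀ ∨ p.2 = b₁) → ∃ q, F q = p := by
    rintro ⟨a, b⟩ (rfl | rfl)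
    exacts [⟨(a, 0), rfl⟩, ⟨(a, 1), rfl⟩]
  obtain ⟨x, rfl⟩ := hlift x hxl
  obtain ⟨y, rfl⟩ := hlift y hyl
  calc _ ≤ (F ⁻¹' S).ncard := vConn_le_ncard_s14 _ (isVertexCut_preimage F hx hy hxy)
    _ = _ := by rw [Set.ncard_eq_sum_ncard_layer, Fin.sum_univ_two]; rfl

theorem minDeg_le_ncard_layer (hK : (G.tensorProd H).IsUnionOfComponentsOff S K) {s r : W}
    (hs : s ∈ Prod.snd '' K) (hsr : H.Adj s r) (hr : r ∉ Prod.snd '' K) :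
    G.minDeg ≤ (S.layer r).ncard := by
  obtain ⟨⟨a, s⟩, ha, rfl⟩ := hs
  refine (minDeg_le_ncard_neighborSet_s14 G a).trans (Set.ncard_le_ncard fun b hb => ?_)
  by_contra hbS
  exact hr ⟨(b, r), hK.2 ha hbS ⟨hb, hsr⟩, rfl⟩

end SimpleGraph

namespace Fin

variable {n : ℕ}

theorem add_one_induction {E : Fin (n + 1) → Prop} {r : Fin (n + 1)} (hr : E r)
    (hstep : ∀ y, E y → E (y + 1)) (j : Fin (n + 1)) : E j := by
  have key : ∀ k : ℕ, E (r + k) := by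
    intro k
    induction k with
    | zero => simpa using hr
    | succ k ih => simpa [add_assoc] using hstep _ ih
  simpa using key (j - r).val

theorem exists_two_boundary {J : Set (Fin (n + 1))} (hJ : J.Nonempty) {x₁ x₂ : Fin (n + 1)}
    (hx : x₁ ≠ x₂) (h₁ : x₁ ∉ J) (h₂ : x₂ ∉ J) :
    ∃ r₁ r₂, r₁ ≠ r₂ ∧ r₁ ∉ J ∧ r₂ ∉ J ∧ r₁ - 1 ∈ J ∧ r₂ + 1 ∈ J := by
  obtain ⟨y, hyJ, hy⟩ : ∃ y ∈ J, y + 1 ∉ J := by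
    by_contra! h
    obtain ⟨j, hj⟩ := hJ
    exact h₁ (add_one_induction hj h x₁)
  have hr : y + 1 - 1 ∈ J := by simpa using hyJ
  by_contra! hne
  obtain ⟨x, hxJ, hxr⟩ : ∃ x ∉ J, x ≠ y + 1 := by
    by_cases h : x₁ = y + 1
    exacts [⟨x₂, h₂, h ▸ hx.symm⟩, ⟨x₁, h₁, h⟩]
  -- outside `J`, only `y + 1` can precede a point of `J`, and `y + 1` is not reached from below
  have key : ∀ z, z ∉ J ∧ z ≠ y + 1 → z + 1 ∉ J ∧ z + 1 ≠ y + 1 := by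
    rintro z ⟨hz, hzr⟩
    exact ⟨hne (y + 1) z hzr.symm hy hz hr, fun h => hz (add_right_cancel h ▸ hyJ)⟩
  exact (add_one_induction (E := fun z => z ∉ J ∧ z ≠ y + 1) ⟨hxJ, hxr⟩ key (y + 1)).2 rfl

theorem mem_or_add_one_mem {J : Set (Fin (n + 2))} {i₀ : Fin (n + 2)} (h : ∀ j ≠ i₀, j ∈ J)
    (i : Fin (n + 2)) : i ∈ J ∨ i + 1 ∈ J := by
  by_cases hi : i = i₀
  · exact Or.inr (h _ (hi ▸ by simp))
  · exact Or.inl (h i hi)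

theorem sub_one_ne_add_one (i : Fin (n + 3)) : i - 1 ≠ i + 1 := by
  intro h
  have h2 : i + 1 - (i - 1) = 0 := by rw [h, sub_self]
  rw [add_sub_sub_cancel, Fin.ext_iff] at h2
  simp only [Fin.val_add, val_one, val_zero] at h2
  rw [Nat.mod_eq_of_lt (by omega)] at h2
  omega

end Fin

namespace SimpleGraph

variable {V : Type*} {G : SimpleGraph V} {m : ℕ}

theorem cycleGraph_adj_add_one (i : Fin (m + 2)) : (cycleGraph (m + 2)).Adj i (i + 1) := by
  simp [cycleGraph_adj]

theorem ncard_neighborSet_tensorProd_cycleGraph (a : V) (z : Fin (m + 3)) :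
    ((G.tensorProd (cycleGraph (m + 3))).neighborSet (a, z)).ncard =
      2 * (G.neighborSet a).ncard := by
  rw [neighborSet_tensorProd, Set.ncard_prod, cycleGraph_neighborSet,
    Set.ncard_pair (Fin.sub_one_ne_add_one z), mul_comm]

theorem minDeg_tensorProd_cycleGraph [Nonempty V] :
    (G.tensorProd (cycleGraph (m + 3))).minDeg = 2 * G.minDeg := by
  obtain ⟨a, ha⟩ := G.exists_ncard_neighborSet_eq_minDeg_s14
  refine le_antisymm ?_ (le_csInf ⟨_, (a, 0), rfl⟩ ?_)
  · simpa [ncard_neighborSet_tensorProd_cycleGraph, ha] using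
      minDeg_le_ncard_neighborSet_s14 (G.tensorProd (cycleGraph (m + 3))) (a, 0)
  · rintro _ ⟨⟨b, z⟩, rfl⟩
    rw [ncard_neighborSet_tensorProd_cycleGraph]
    exact Nat.mul_le_mul_left 2 (minDeg_le_ncard_neighborSet_s14 G b)

theorem vConn_tensorProd_cycleGraph_le [Nonempty V] :
    (G.tensorProd (cycleGraph (m + 3))).vConn ≤ 2 * G.minDeg := by
  obtain ⟨a, ha⟩ := G.exists_ncard_neighborSet_eq_minDeg_s14
  have hcut := isVertexCut_neighborSet (G.tensorProd (cycleGraph (m + 3)))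
    (v := (a, 0)) (w := (a, 1)) (by simp) fun h => G.loopless.irrefl a h.1
  simpa [ncard_neighborSet_tensorProd_cycleGraph, ha] using vConn_le_ncard_s14 _ hcut

variable {S K : Set (V × Fin (m + 3))}

theorem compl_nonempty_of_ncard_le [Finite V] [Nonempty V] (hS : S.ncard ≤ 2 * G.minDeg) :
    Sᶜ.Nonempty := by
  refine Set.nonempty_compl.mpr fun hSu => ?_
  have hlt := G.minDeg_lt_card
  rw [hSu, Set.ncard_univ, Nat.card_prod, Nat.card_eq_fintype_card (α := Fin (m + 3)),
    Fintype.card_fin] at hS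
  nlinarith

theorem forall_mem_image_snd_of_layer_eq_empty (hG : ∀ a, ∃ b, G.Adj a b)
    (hK : (G.tensorProd (cycleGraph (m + 3))).IsUnionOfComponentsOff S K)
    {R : Set (Fin (m + 3))} (hR : R ⊆ Prod.snd '' K) {r : Fin (m + 3)} (hr : r ∈ R)
    (hS : ∀ j ∉ R, S.layer j = ∅) (j : Fin (m + 3)) : j ∈ Prod.snd '' K := by
  refine Fin.add_one_induction (hR hr) ?_ j
  rintro _ ⟨⟨a, y⟩, hay, rfl⟩
  by_cases hy : y + 1 ∈ R
  · exact hR hy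
  obtain ⟨b, hab⟩ := hG a
  have hb : (b, y + 1) ∉ S := fun h => (hS _ hy).subset h
  exact ⟨_, hK.2 hay hb ⟨hab, cycleGraph_adj_add_one y⟩, rfl⟩

theorem false_of_two_missing_layers [Finite V] (hG : ∀ a, ∃ b, G.Adj a b)
    (hκ : 0 < (G.tensorProd (⊤ : SimpleGraph (Fin 2))).vConn) (hS : S.ncard ≤ 2 * G.minDeg)
    (hK : (G.tensorProd (cycleGraph (m + 3))).IsUnionOfComponentsOff S K)
    {a b : V} {j : Fin (m + 3)} (ha : (a, j) ∈ K) (hb : (b, j + 1) ∈ K)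
    {x₁ x₂ : Fin (m + 3)} (hx : x₁ ≠ x₂) (h₁ : x₁ ∉ Prod.snd '' K) (h₂ : x₂ ∉ Prod.snd '' K) :
    False := by
  have : Nonempty V := ⟨a⟩
  obtain ⟨r₁, r₂, hr, hr₁, hr₂, hs₁, hs₂⟩ :=
    Fin.exists_two_boundary (J := Prod.snd '' K) ⟨j, (a, j), ha, rfl⟩ hx h₁ h₂
  have hδ₁ := minDeg_le_ncard_layer G hK hs₁
    (by simpa using cycleGraph_adj_add_one (m := m + 1) (r₁ - 1)) hr₁
  have hδ₂ := minDeg_le_ncard_layer G hK hs₂ (cycleGraph_adj_add_one r₂).symm hr₂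
  -- two boundary layers already carry `2δ ≥ |S|` vertices of `S`
  obtain ⟨hle₁, hle₂, hempty⟩ := Set.layer_eq_empty_of_two_mul_le hr hδ₁ hδ₂ hS
  have hD : ({r₁, r₂} : Set (Fin (m + 3))) ⊆ Prod.snd '' (Sᶜ \ K) := by
    rintro r (rfl | rfl)
    exacts [Set.mem_image_snd_diff_of_ncard_layer_lt (hle₁.trans_lt G.minDeg_lt_card) hr₁,
      Set.mem_image_snd_diff_of_ncard_layer_lt (hle₂.trans_lt G.minDeg_lt_card) hr₂]
  have hKR : ∀ i ∈ Prod.snd '' K, i ∉ ({r₁, r₂} : Set (Fin (m + 3))) := by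
    rintro i hi (rfl | rfl)
    exacts [hr₁ hi, hr₂ hi]
  obtain ⟨c, hc⟩ : ∃ c, (c, j) ∈ Sᶜ \ K := by
    obtain ⟨⟨c, _⟩, hc, rfl⟩ := forall_mem_image_snd_of_layer_eq_empty hG hK.compl_diff hD
      (Set.mem_insert r₁ _) hempty j
    exact ⟨c, hc⟩
  have hκS := vConn_tensorProd_top_le G (cycleGraph_adj_add_one _) (hK.1 ha) hc.1
    (Or.inl rfl) (Or.inl rfl) (hK.not_reachable ha hc.2)
  rw [hempty j (hKR _ ⟨_, ha, rfl⟩), hempty (j + 1) (hKR _ ⟨_, hb, rfl⟩), Set.ncard_empty] at hκS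
  omega

theorem exists_eq_neighborSet_or_forall_ne_mem [Finite V] (hG : ∀ a, ∃ b, G.Adj a b)
    (hκ : 0 < (G.tensorProd (⊤ : SimpleGraph (Fin 2))).vConn) (hS : S.ncard ≤ 2 * G.minDeg)
    (hK : (G.tensorProd (cycleGraph (m + 3))).IsUnionOfComponentsOff S K) {x : V × Fin (m + 3)}
    (hx : x ∈ K) :
    (∃ v, ((G.tensorProd (cycleGraph (m + 3))).neighborSet v).ncard =
        (G.tensorProd (cycleGraph (m + 3))).minDeg ∧
      S = (G.tensorProd (cycleGraph (m + 3))).neighborSet v) ∨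
      ∃ i₀, ∀ j ≠ i₀, j ∈ Prod.snd '' K := by
  obtain ⟨a, i⟩ := x
  have : Nonempty V := ⟨a⟩
  by_cases hN : (G.tensorProd (cycleGraph (m + 3))).neighborSet (a, i) ⊆ S
  · have hSN : S = (G.tensorProd (cycleGraph (m + 3))).neighborSet (a, i) := by
      refine (Set.eq_of_subset_of_ncard_le hN ?_).symm
      rw [ncard_neighborSet_tensorProd_cycleGraph]
      exact hS.trans (Nat.mul_le_mul_left 2 (minDeg_le_ncard_neighborSet_s14 G a))
    refine Or.inl ⟨(a, i), le_antisymm ?_ (minDeg_le_ncard_neighborSet_s14 _ _), hSN⟩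
    rwa [minDeg_tensorProd_cycleGraph, ← hSN]
  refine Or.inr (by_contra fun h => ?_)
  push Not at h
  obtain ⟨x₁, -, h₁⟩ := h 0
  obtain ⟨x₂, hx₂₁, h₂⟩ := h x₁
  obtain ⟨⟨b, k⟩, ⟨hab, hik⟩, hbS⟩ := Set.not_subset.mp hN
  have hbK := hK.2 hx hbS ⟨hab, hik⟩
  have hk : k ∈ ({i - 1, i + 1} : Set (Fin (m + 3))) := cycleGraph_neighborSet ▸ hik
  rcases hk with rfl | rfl
  · exact false_of_two_missing_layers hG hκ hS hK hbK (by simpa using hx) hx₂₁ h₂ h₁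
  · exact false_of_two_missing_layers hG hκ hS hK hx hbK hx₂₁ h₂ h₁

theorem mul_vConn_tensorProd_top_le [Finite V] {K' : Set (V × Fin (m + 3))}
    (hK : (G.tensorProd (cycleGraph (m + 3))).IsUnionOfComponentsOff S K)
    (hK' : (G.tensorProd (cycleGraph (m + 3))).IsUnionOfComponentsOff S K')
    (hKK' : Disjoint K K') (h : ∃ i₀, ∀ j ≠ i₀, j ∈ Prod.snd '' K)
    (h' : ∃ i₀, ∀ j ≠ i₀, j ∈ Prod.snd '' K') :
    (m + 3) * (G.tensorProd (⊤ : SimpleGraph (Fin 2))).vConn ≤ 2 * S.ncard := by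
  have hmeet : ∀ {L : Set (V × Fin (m + 3))}, (∃ i₀, ∀ j ≠ i₀, j ∈ Prod.snd '' L) →
      ∀ i, ∃ p ∈ L, p.2 = i ∨ p.2 = i + 1 := by
    rintro L ⟨i₀, hi₀⟩ i
    rcases Fin.mem_or_add_one_mem (n := m + 1) hi₀ i with ⟨p, hp, hpi⟩ | ⟨p, hp, hpi⟩
    exacts [⟨p, hp, Or.inl hpi⟩, ⟨p, hp, Or.inr hpi⟩]
  have hpair : ∀ i, (G.tensorProd (⊤ : SimpleGraph (Fin 2))).vConn ≤
      (S.layer i).ncard + (S.layer (i + 1)).ncard := by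
    intro i
    obtain ⟨p, hp, hpi⟩ := hmeet h i
    obtain ⟨q, hq, hqi⟩ := hmeet h' i
    exact vConn_tensorProd_top_le G (cycleGraph_adj_add_one i) (hK.1 hp) (hK'.1 hq) hpi hqi
      (hK.not_reachable hp (hKK'.notMem_of_mem_right hq))
  calc (m + 3) * (G.tensorProd (⊤ : SimpleGraph (Fin 2))).vConn
      = ∑ _i : Fin (m + 3), (G.tensorProd (⊤ : SimpleGraph (Fin 2))).vConn := by simp
    _ ≤ ∑ i, ((S.layer i).ncard + (S.layer (i + 1)).ncard) :=
        Finset.sum_le_sum fun i _ => hpair i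
    _ = 2 * S.ncard := by
        rw [Finset.sum_add_distrib, Fintype.sum_equiv (Equiv.addRight 1)
          (fun i => (S.layer (i + 1)).ncard) (fun i => (S.layer i).ncard) fun _ => rfl,
          ← Set.ncard_eq_sum_ncard_layer]
        ring

end SimpleGraph

theorem stmt_14_general (G : SimpleGraph α)
    (n : ℕ) (hn : 7 ≤ n)
    (hk : 4 * G.minDeg < (n - 1) * (G.tensorProd (⊤ : SimpleGraph (Fin 2))).vConn) :
    (G.tensorProd (cycleGraph n)).SuperConnected := by
  obtain ⟨m, rfl⟩ : ∃ m, n = m + 3 := ⟨n - 3, by omega⟩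
  have hκ : 0 < (G.tensorProd (⊤ : SimpleGraph (Fin 2))).vConn :=
    Nat.pos_of_ne_zero fun h => by simp [h] at hk
  have hG (a : α) : ∃ b, G.Adj a b :=
    let ⟨⟨b, _⟩, hab⟩ := exists_adj_of_vConn_pos hκ (a, 0)
    ⟨b, hab.1⟩
  have := finite_of_vConn_pos hκ
  have : Finite α := Finite.prod_left (Fin 2)
  have : Nonempty α := (nontrivial_of_vConn_pos hκ).to_nonempty.map Prod.fst
  rintro S ⟨hcut, hSκ⟩
  have hS : S.ncard ≤ 2 * G.minDeg := hSκ ▸ vConn_tensorProd_cycleGraph_le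
  have := (compl_nonempty_of_ncard_le hS).to_subtype
  obtain ⟨c, d, hcd⟩ : ∃ c d, ¬ ((G.tensorProd (cycleGraph (m + 3))).induce Sᶜ).Reachable c d := by
    by_contra! h
    exact hcut ⟨h⟩
  rcases exists_eq_neighborSet_or_forall_ne_mem hG hκ hS (isUnionOfComponentsOff_reachable c)
    ⟨c, .refl c, rfl⟩ with h | hc
  · exact h
  rcases exists_eq_neighborSet_or_forall_ne_mem hG hκ hS (isUnionOfComponentsOff_reachable d)
    ⟨d, .refl d, rfl⟩ with h | hd
  · exact h
  have hsum := mul_vConn_tensorProd_top_le (isUnionOfComponentsOff_reachable c)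
    (isUnionOfComponentsOff_reachable d) (disjoint_image_reachable hcd) hc hd
  have hmono : (m + 3 - 1) * (G.tensorProd (⊤ : SimpleGraph (Fin 2))).vConn ≤
      (m + 3) * (G.tensorProd (⊤ : SimpleGraph (Fin 2))).vConn := Nat.mul_le_mul_right _ (by omega)
  omega

/-- For a connected non-bipartite graph G and odd n ≥ 7, if
κ(G × K₂) > (4/(n-1))·δ(G), then G × Cₙ is super connected. -/
theorem stmt_14 (G : SimpleGraph α) (hGc : G.Connected) (hGb : ¬ G.Colorable 2)
    (n : ℕ) (hn : 7 ≤ n) (hodd : Odd n)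
    (hk : 4 * G.minDeg < (n - 1) * (G.tensorProd (⊤ : SimpleGraph (Fin 2))).vConn) :
    (G.tensorProd (cycleGraph n)).SuperConnected :=
  stmt_14_general G n hn hk
end
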